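/- Completeness of the top-level synthesis algorithm: assume (1) the angelic synthesizer is complete, i.e., if SynthesizeAngelic(ψ) returns Failure(κ) then no program P satisfies P ⊨^angel ψ, and (2) whenever SynthesizeAngelic returns Failure(κ), the set κ is a valid anti-specification, i.e., for every φ ∈ κ and every program P, P ⊨ φ implies P ⊭ χ. Then if Synthesize(χ) returns ⊥, no program satisfies χ under the standard semantics. -/

import Mathlib

/-- Values of the simple ML-like language: unit, pairs, sums. -/
inductive Val : Type
  | unit : Val
  | pair : Val → Val → Val
  | inl  : Val → Val
  | inr  : Val → Val

/-- Expressions of the simple ML-like language with a single recursive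
function symbol `f` (written `app e` for `f e`) and a single variable `x`. -/
inductive Expr : Type
  | var    : Expr
  | app    : Expr → Expr
  | unit   : Expr
  | pair   : Expr → Expr → Expr
  | fst    : Expr → Expr
  | snd    : Expr → Expr
  | inl    : Expr → Expr
  | inr    : Expr → Expr
  | unl    : Expr → Expr
  | unr    : Expr → Expr
  | switch : Expr → Expr → Expr → Expr

/-- Standard big-step semantics `e ⇓ v` for the program `rec f(x) = body`,
with `env` the value currently substituted for `x`.  A recursive call
`f e` unfolds `body` at the value of `e`. -/
inductive Eval (body : Expr) : Val → Expr → Val → Prop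
  | var {env} : Eval body env .var env
  | app {env e v v'} : Eval body env e v → Eval body v body v' →
      Eval body env (.app e) v'
  | unit {env} : Eval body env .unit .unit
  | pair {env e1 e2 v1 v2} : Eval body env e1 v1 → Eval body env e2 v2 →
      Eval body env (.pair e1 e2) (.pair v1 v2)
  | fst {env e v1 v2} : Eval body env e (.pair v1 v2) → Eval body env (.fst e) v1
  | snd {env e v1 v2} : Eval body env e (.pair v1 v2) → Eval body env (.snd e) v2
  | inl {env e v} : Eval body env e v → Eval body env (.inl e) (.inl v)
  | inr {env e v} : Eval body env e v → Eval body env (.inr e) (.inr v)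
  | unl {env e v} : Eval body env e (.inl v) → Eval body env (.unl e) v
  | unr {env e v} : Eval body env e (.inr v) → Eval body env (.unr e) v
  | switchL {env e3 e1 e2 v3 v1} : Eval body env e3 (.inl v3) →
      Eval body env e1 v1 → Eval body env (.switch e3 e1 e2) v1
  | switchR {env e3 e1 e2 v3 v2} : Eval body env e3 (.inr v3) →
      Eval body env e2 v2 → Eval body env (.switch e3 e1 e2) v2

/-- A ground specification over the uninterpreted function symbol `f`,
modelled semantically as the set of its models (interpretations of `f`). -/
def Spec : Type := (Val → Val) → Prop

/-- `SAT(φ ∧ f(v) = v')`: the formula `φ` together with `f(v) = v'`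
is satisfiable. -/
def Spec.sat (φ : Spec) (v v' : Val) : Prop := ∃ g : Val → Val, φ g ∧ g v = v'

/-- Angelic big-step semantics `e ⇓^φ v` relative to the ground
specification `φ`: a recursive call `f e` may return any value `v'`
such that `φ ∧ f(v) = v'` is satisfiable, where `e ⇓^φ v`. -/
inductive AEval (φ : Spec) : Val → Expr → Val → Prop
  | var {env} : AEval φ env .var env
  | app {env e v v'} : AEval φ env e v → φ.sat v v' → AEval φ env (.app e) v'
  | unit {env} : AEval φ env .unit .unit
  | pair {env e1 e2 v1 v2} : AEval φ env e1 v1 → AEval φ env e2 v2 →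
      AEval φ env (.pair e1 e2) (.pair v1 v2)
  | fst {env e v1 v2} : AEval φ env e (.pair v1 v2) → AEval φ env (.fst e) v1
  | snd {env e v1 v2} : AEval φ env e (.pair v1 v2) → AEval φ env (.snd e) v2
  | inl {env e v} : AEval φ env e v → AEval φ env (.inl e) (.inl v)
  | inr {env e v} : AEval φ env e v → AEval φ env (.inr e) (.inr v)
  | unl {env e v} : AEval φ env e (.inl v) → AEval φ env (.unl e) v
  | unr {env e v} : AEval φ env e (.inr v) → AEval φ env (.unr e) v
  | switchL {env e3 e1 e2 v3 v1} : AEval φ env e3 (.inl v3) →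
      AEval φ env e1 v1 → AEval φ env (.switch e3 e1 e2) v1
  | switchR {env e3 e1 e2 v3 v2} : AEval φ env e3 (.inr v3) →
      AEval φ env e2 v2 → AEval φ env (.switch e3 e1 e2) v2

/-- `F` is the (total) standard input-output semantics of the program
`rec f(x) = body`. -/
def Agrees (body : Expr) (F : Val → Val) : Prop := ∀ v, Eval body v body (F v)

/-- `P ⊨ φ`: the program `rec f(x) = body` satisfies the ground
specification `φ` under the standard semantics, i.e. substituting the
input-output behaviour of the program for `f` makes `φ` true. -/
def Sat (body : Expr) (φ : Spec) : Prop := ∃ F : Val → Val, Agrees body F ∧ φ F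

/-- Conjunction of ground specifications. -/
def Spec.and (φ ψ : Spec) : Spec := fun g => φ g ∧ ψ g

/-- Negation of a ground specification. -/
def Spec.neg (φ : Spec) : Spec := fun g => ¬ φ g

/-- The specification `χ ∧ ⋀_{φ ∈ Ω} ¬φ` used by the algorithm, where `Ω`
is the global anti-specification set. -/
def strengthen (χ : Spec) (Ω : Set Spec) : Spec :=
  fun g => χ g ∧ ∀ φ ∈ Ω, ¬ φ g

/-- Result of the angelic synthesizer: either failure together with an
anti-specification `κ`, or success with a candidate program `P` and a
witness `ω` to angelic satisfaction. -/
inductive SAResult : Type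
  | failure : Set Spec → SAResult
  | success : Expr → Spec → SAResult

/-- The top-level backtracking synthesis algorithm (Algorithm 1),
parameterized by the angelic synthesizer `SA`, formalized as an inductive
relation `Synth SA χ Ω result Ω'` relating the input specification `χ`,
the incoming global anti-specification `Ω`, the returned result (`some P`
or `⊥ = none`) and the outgoing global anti-specification `Ω'`. -/
inductive Synth (SA : Spec → SAResult) : Spec → Set Spec → Option Expr → Set Spec → Prop
  | fail {χ Ω κ} :
      SA (strengthen χ Ω) = .failure κ →
      Synth SA χ Ω none (Ω ∪ κ)
  | found {χ Ω P ω} :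
      SA (strengthen χ Ω) = .success P ω →
      Sat P χ →
      Synth SA χ Ω (some P) Ω
  | recSuccess {χ Ω P ω P' Ω'} :
      SA (strengthen χ Ω) = .success P ω →
      ¬ Sat P χ →
      Synth SA (χ.and ω) Ω (some P') Ω' →
      Synth SA χ Ω (some P') Ω'
  | recBacktrack {χ Ω P ω Ω' r Ω''} :
      SA (strengthen χ Ω) = .success P ω →
      ¬ Sat P χ →
      Synth SA (χ.and ω) Ω none Ω' →
      Synth SA (χ.and ω.neg) Ω' r Ω'' →
      Synth SA χ Ω r Ω''

/-- `P` angelically satisfies `φ` (on all inputs). -/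
def ASat (body : Expr) (φ : Spec) : Prop :=
  ∀ v : Val, ∃ v' : Val, AEval φ v body v' ∧ φ.sat v v'

/-!
An anti-specification is only ever enlarged by failures of the angelic synthesizer, whose
anti-specifications are valid by assumption, so validity of `Ω` is an invariant of the search.
When `Synthesize(χ')` returns `⊥`, no program satisfying `χ'` satisfies `χ`: at a failure, such a
program either satisfies `χ' ∧ ⋀_{φ ∈ Ω} ¬φ`, hence satisfies it angelically, contradicting the
completeness of the angelic synthesizer, or it satisfies some `φ ∈ Ω` and so not `χ`; at a
backtracking step it satisfies one of `χ' ∧ ω` and `χ' ∧ ¬ω`, both of which returned `⊥`.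
Taking `χ' = χ` at the root gives the theorem.
-/

def IsAntiSpec (χ : Spec) (Ω : Set Spec) : Prop := ∀ φ ∈ Ω, ∀ P : Expr, Sat P φ → ¬ Sat P χ

theorem IsAntiSpec.union {χ : Spec} {Ω κ : Set Spec} (hΩ : IsAntiSpec χ Ω)
    (hκ : IsAntiSpec χ κ) : IsAntiSpec χ (Ω ∪ κ) := by
  rintro φ (hφ | hφ)
  exacts [hΩ φ hφ, hκ φ hφ]

theorem Eval.det {body : Expr} {env : Val} {e : Expr} {v w : Val}
    (h : Eval body env e v) (h' : Eval body env e w) : v = w := by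
  induction h generalizing w <;> cases h' <;> grind

theorem AEval.of_eval {body : Expr} {ψ : Spec} (hsat : ∀ u w, Eval body u body w → ψ.sat u w)
    {env : Val} {e : Expr} {v : Val} (h : Eval body env e v) : AEval ψ env e v := by
  induction h with
  | app _ hbody ih _ => exact .app ih (hsat _ _ hbody)
  | switchR _ _ ih₃ ih₂ => exact .switchR ih₃ ih₂
  | _ => constructor <;> assumption

/-- By determinism, every recursive call returns the value of the program's own input-output
behaviour, which is a model of `ψ`. -/
theorem Sat.asat {P : Expr} {ψ : Spec} (h : Sat P ψ) : ASat P ψ := by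
  obtain ⟨F, hF, hψ⟩ := h
  have hsat : ∀ u w, Eval P u P w → ψ.sat u w := fun u w hw => ⟨F, hψ, (hF u).det hw⟩
  exact fun v => ⟨F v, .of_eval hsat (hF v), F, hψ, rfl⟩

theorem Sat.strengthen_or {P : Expr} {χ : Spec} (Ω : Set Spec) (h : Sat P χ) :
    Sat P (strengthen χ Ω) ∨ ∃ φ ∈ Ω, Sat P φ := by
  obtain ⟨F, hF, hχ⟩ := h
  by_cases hΩ : ∀ φ ∈ Ω, ¬ φ F
  · exact .inl ⟨F, hF, hχ, hΩ⟩
  · push Not at hΩ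
    obtain ⟨φ, hφ, hφF⟩ := hΩ
    exact .inr ⟨φ, hφ, F, hF, hφF⟩

theorem Sat.and_or_and_neg {P : Expr} {χ : Spec} (ω : Spec) (h : Sat P χ) :
    Sat P (χ.and ω) ∨ Sat P (χ.and ω.neg) := by
  obtain ⟨F, hF, hχ⟩ := h
  by_cases hω : ω F
  exacts [.inl ⟨F, hF, hχ, hω⟩, .inr ⟨F, hF, hχ, hω⟩]

theorem Synth.isAntiSpec {SA : Spec → SAResult} {χ : Spec}
    (hcomplete : ∀ ψ κ, SA ψ = .failure κ → ∀ P : Expr, ¬ ASat P ψ)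
    (hvalid : ∀ ψ κ, SA ψ = .failure κ → IsAntiSpec χ κ)
    {χ' : Spec} {Ω Ω' : Set Spec} {r : Option Expr} (h : Synth SA χ' Ω r Ω')
    (hΩ : IsAntiSpec χ Ω) :
    IsAntiSpec χ Ω' ∧ (r = none → ∀ P : Expr, Sat P χ' → ¬ Sat P χ) := by
  induction h with
  | @fail _ Ω _ hfail =>
      refine ⟨hΩ.union (hvalid _ _ hfail), fun _ P hP => ?_⟩
      rcases hP.strengthen_or Ω with hP | ⟨φ, hφ, hPφ⟩
      exacts [absurd hP.asat (hcomplete _ _ hfail P), hΩ φ hφ P hPφ]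
  | found => exact ⟨hΩ, nofun⟩
  | recSuccess _ _ _ ih => exact ⟨(ih hΩ).1, nofun⟩
  | @recBacktrack _ _ _ ω _ _ _ _ _ _ _ ih₁ ih₂ =>
      obtain ⟨hΩ', hω⟩ := ih₁ hΩ
      obtain ⟨hΩ'', hnegω⟩ := ih₂ hΩ'
      refine ⟨hΩ'', fun hr P hP => ?_⟩
      rcases hP.and_or_and_neg ω with hP | hP
      exacts [hω rfl P hP, hnegω hr P hP]

/-- completeness of the top-level synthesis algorithm.
Assume (1) the angelic synthesizer is complete: whenever it fails on `ψ`,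
no program angelically satisfies `ψ`; and (2) whenever it returns
`Failure(κ)`, the set `κ` is a valid anti-specification for `χ`: for every
`φ ∈ κ` and program `P`, `P ⊨ φ` implies `P ⊭ χ`.  If, starting from a
global anti-specification `Ω` valid for `χ`, `Synthesize(χ)` returns `⊥`,
then no program satisfies `χ` under the standard semantics. -/
theorem synthesize_complete (SA : Spec → SAResult) (χ : Spec)
    (h1 : ∀ ψ κ, SA ψ = .failure κ → ∀ P : Expr, ¬ ASat P ψ)
    (h2 : ∀ ψ κ, SA ψ = .failure κ → ∀ φ ∈ κ, ∀ P : Expr, Sat P φ → ¬ Sat P χ)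
    (Ω Ω' : Set Spec)
    (hΩ : ∀ φ ∈ Ω, ∀ P : Expr, Sat P φ → ¬ Sat P χ)
    (h : Synth SA χ Ω none Ω') :
    ∀ P : Expr, ¬ Sat P χ :=
  fun P hP => (Synth.isAntiSpec h1 h2 h hΩ).2 rfl P hP hP
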